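/- For any k ≥ 6 and any positive integers a₁,…,a_k, the product Â_{a₁}Â_{a₂}⋯Â_{a_{k−1}} of 3×3 matrices Â_j := [[0,1,0],[j+1,0,j],[j,0,j−1]] has all entries strictly positive. -/

import Mathlib

/-- `Â_j` is the 3×3 matrix with rows `(0,1,0)`, `(j+1,0,j)`, `(j,0,j−1)`. -/
def Ahat (j : ℕ) : Matrix (Fin 3) (Fin 3) ℤ :=
  !![0, 1, 0; (j : ℤ) + 1, 0, (j : ℤ); (j : ℤ), 0, (j : ℤ) - 1]

def B0 : Matrix (Fin 3) (Fin 3) ℤ := !![0,1,0;1,0,1;1,0,0]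

lemma B0_le_Ahat (j : ℕ) (hj : 1 ≤ j) : ∀ r c : Fin 3, B0 r c ≤ Ahat j r c := by
  intro r c
  fin_cases r <;> fin_cases c <;> simp [B0, Ahat, Matrix.vecHead, Matrix.vecTail] <;> omega

lemma Ahat_nonneg (j : ℕ) (hj : 1 ≤ j) : ∀ r c : Fin 3, 0 ≤ Ahat j r c := by
  intro r c
  fin_cases r <;> fin_cases c <;> simp [Ahat, Matrix.vecHead, Matrix.vecTail] <;> omega

lemma mul_nonneg' {M N : Matrix (Fin 3) (Fin 3) ℤ} (hM : ∀ i j, 0 ≤ M i j)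
    (hN : ∀ i j, 0 ≤ N i j) : ∀ i j, 0 ≤ (M * N) i j := by
  intro i j
  rw [Matrix.mul_apply]
  exact Finset.sum_nonneg fun m _ => mul_nonneg (hM i m) (hN m j)

lemma mul_mono {A B C D : Matrix (Fin 3) (Fin 3) ℤ}
    (hB : ∀ i j, 0 ≤ B i j) (hBA : ∀ i j, B i j ≤ A i j)
    (hD : ∀ i j, 0 ≤ D i j) (hDC : ∀ i j, D i j ≤ C i j) :
    ∀ i j, (B * D) i j ≤ (A * C) i j := by
  intro i j
  rw [Matrix.mul_apply, Matrix.mul_apply]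
  refine Finset.sum_le_sum fun m _ => ?_
  exact mul_le_mul (hBA i m) (hDC m j) (hD m j) ((hB i m).trans (hBA i m))

/-- Nonnegative with a positive entry in every column. -/
def ColPos (M : Matrix (Fin 3) (Fin 3) ℤ) : Prop :=
  (∀ i j, 0 ≤ M i j) ∧ ∀ c, ∃ r, 0 < M r c

lemma colPos_one : ColPos 1 := by
  constructor
  · intro i j
    by_cases h : i = j <;> simp [Matrix.one_apply, h]
  · intro c
    exact ⟨c, by simp [Matrix.one_apply]⟩

lemma colPos_Ahat (j : ℕ) (hj : 1 ≤ j) : ColPos (Ahat j) := by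
  refine ⟨Ahat_nonneg j hj, ?_⟩
  intro c
  fin_cases c
  · exact ⟨1, by simp [Ahat, Matrix.vecHead, Matrix.vecTail]⟩
  · exact ⟨0, by simp [Ahat, Matrix.vecHead, Matrix.vecTail]⟩
  · exact ⟨1, by simp [Ahat, Matrix.vecHead, Matrix.vecTail]; omega⟩

lemma colPos_mul {M N : Matrix (Fin 3) (Fin 3) ℤ} (hM : ColPos M) (hN : ColPos N) :
    ColPos (M * N) := by
  refine ⟨mul_nonneg' hM.1 hN.1, ?_⟩
  intro c
  obtain ⟨m, hm⟩ := hN.2 c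
  obtain ⟨r, hr⟩ := hM.2 m
  refine ⟨r, ?_⟩
  rw [Matrix.mul_apply]
  exact Finset.sum_pos' (fun x _ => mul_nonneg (hM.1 r x) (hN.1 x c))
    ⟨m, Finset.mem_univ m, mul_pos hr hm⟩

lemma pos_mul_colPos {M N : Matrix (Fin 3) (Fin 3) ℤ}
    (hM : ∀ i j, 0 < M i j) (hN : ColPos N) : ∀ i j, 0 < (M * N) i j := by
  intro i j
  obtain ⟨m, hm⟩ := hN.2 j
  rw [Matrix.mul_apply]
  exact Finset.sum_pos' (fun x _ => mul_nonneg (hM i x).le (hN.1 x j))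
    ⟨m, Finset.mem_univ m, mul_pos (hM i m) hm⟩

lemma colPos_prod (l : List ℕ) (hl : ∀ x ∈ l, 1 ≤ x) :
    ColPos ((l.map Ahat).prod) := by
  induction l with
  | nil => simpa using colPos_one
  | cons x xs ih =>
    simp only [List.map_cons, List.prod_cons]
    exact colPos_mul (colPos_Ahat x (hl x (by simp)))
      (ih fun y hy => hl y (by simp [hy]))

lemma prod_ge (l : List ℕ) (hl : ∀ x ∈ l, 1 ≤ x) :
    ∀ i j, 0 ≤ ((B0 ^ l.length : Matrix (Fin 3) (Fin 3) ℤ)) i j ∧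
      (B0 ^ l.length : Matrix (Fin 3) (Fin 3) ℤ) i j ≤ ((l.map Ahat).prod) i j := by
  induction l with
  | nil =>
    intro i j
    simp only [List.length_nil, pow_zero, List.map_nil, List.prod_nil]
    constructor
    · by_cases h : i = j <;> simp [Matrix.one_apply, h]
    · exact le_refl _
  | cons x xs ih =>
    intro i j
    have hx : 1 ≤ x := hl x (by simp)
    have ihx := ih fun y hy => hl y (by simp [hy])
    simp only [List.length_cons, pow_succ', List.map_cons, List.prod_cons]
    constructor
    · exact mul_nonneg' (fun r c => by
        have := B0_le_Ahat 1 le_rfl r c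
        fin_cases r <;> fin_cases c <;> simp [B0, Matrix.vecHead, Matrix.vecTail]) (fun r c => (ihx r c).1) i j
    · exact mul_mono (fun r c => by fin_cases r <;> fin_cases c <;> simp [B0, Matrix.vecHead, Matrix.vecTail])
        (B0_le_Ahat x hx) (fun r c => (ihx r c).1) (fun r c => (ihx r c).2) i j

lemma B05_pos : ∀ i j : Fin 3, 0 < ((B0 ^ 5 : Matrix (Fin 3) (Fin 3) ℤ)) i j := by
  intro i j; fin_cases i <;> fin_cases j <;> simp [B0, pow_succ, Matrix.mul_apply, Fin.sum_univ_three]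

lemma prod_pos_of_len (l : List ℕ) (hl : ∀ x ∈ l, 1 ≤ x) (h5 : 5 ≤ l.length) :
    ∀ i j, 0 < ((l.map Ahat).prod) i j := by
  have hsplit : l.map Ahat = (l.take 5).map Ahat ++ (l.drop 5).map Ahat := by
    rw [← List.map_append, List.take_append_drop]
  have hlen : (l.take 5).length = 5 := by
    rw [List.length_take]; omega
  have h1 : ∀ i j, 0 < (((l.take 5).map Ahat).prod) i j := by
    intro i j
    have := prod_ge (l.take 5) (fun y hy => hl y (List.mem_of_mem_take hy)) i j
    rw [hlen] at this
    exact lt_of_lt_of_le (B05_pos i j) this.2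
  have h2 : ColPos (((l.drop 5).map Ahat).prod) :=
    colPos_prod _ (fun y hy => hl y (List.mem_of_mem_drop hy))
  intro i j
  rw [hsplit, List.prod_append]
  exact pos_mul_colPos h1 h2 i j

/-- For any `k ≥ 6` and positive integers `a₁,…,a_k`, the product
`Â_{a₁} Â_{a₂} ⋯ Â_{a_{k−1}}` has all entries strictly positive. -/
theorem Ahat_prod_pos (k : ℕ) (hk : 6 ≤ k) (a : ℕ → ℕ) (ha : ∀ i, 1 ≤ a i) :
    ∀ i j : Fin 3, 0 < (((List.range (k - 1)).map fun m => Ahat (a m)).prod) i j := by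
  intro i j
  have h := prod_pos_of_len ((List.range (k - 1)).map a)
    (by intro x hx; simp only [List.mem_map] at hx; obtain ⟨m, _, rfl⟩ := hx; exact ha m)
    (by simp [List.length_map, List.length_range]; omega) i j
  simpa [List.map_map, Function.comp_def] using h
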